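/- There is a universal constant κ₁ = 258/π such that for all Λ ≥ 1 and all 0 ≤ r ≤ 2Λ, 0 ≤ U_Λ(r) ≤ κ₁ (1 + U(r)). -/

import Mathlib

open Real

/-- `E x = √(1+x²)`. -/
noncomputable def E (x : ℝ) : ℝ := Real.sqrt (1 + x ^ 2)

/-- `Z_Λ(r)`, extended by continuity at `r = 0`. -/
noncomputable def ZL (Λ r : ℝ) : ℝ :=
  if r = 0 then Λ / E Λ else (E Λ - E (Λ - r)) / r

/-- The cut-off function `B_Λ(r)`. -/
noncomputable def BL (Λ r : ℝ) : ℝ :=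
  1 / π * (∫ z in (0:ℝ)..ZL Λ r,
      (z ^ 2 - z ^ 4 / 3) / ((1 - z ^ 2) * (1 + r ^ 2 * (1 - z ^ 2) / 4)))
    + r / (2 * π) * (∫ z in (0:ℝ)..ZL Λ r, (z - z ^ 3 / 3) / (E Λ - r * z / 2))

/-- The constant `B_Λ = B_Λ(0) = (1/π)∫₀^{Λ/E(Λ)} (z² - z⁴/3)/(1-z²) dz`. -/
noncomputable def BC (Λ : ℝ) : ℝ := BL Λ 0

/-- The cut-off Uehling multiplier `U_Λ`. -/
noncomputable def UL (Λ r : ℝ) : ℝ :=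
  if 0 ≤ r ∧ r ≤ 2 * Λ then BC Λ - BL Λ r else 0

/-- The Uehling multiplier `U`. -/
noncomputable def U (r : ℝ) : ℝ :=
  r ^ 2 / (4 * π) * ∫ z in (0:ℝ)..1, (z ^ 2 - z ^ 4 / 3) / (1 + r ^ 2 * (1 - z ^ 2) / 4)

lemma E_pos (x : ℝ) : 0 < E x := Real.sqrt_pos.2 (by positivity)

lemma E_sq (x : ℝ) : E x ^ 2 = 1 + x ^ 2 := Real.sq_sqrt (by positivity)

lemma lt_E (x : ℝ) : x < E x := by nlinarith [E_sq x, E_pos x, sq_nonneg (x - E x)]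

lemma neg_lt_E (x : ℝ) : -x < E x := by nlinarith [E_sq x, E_pos x, sq_nonneg (x + E x)]

lemma one_le_E (x : ℝ) : 1 ≤ E x := by nlinarith [E_sq x, E_pos x, sq_nonneg x]

lemma E_le_E {x y : ℝ} (h : x ^ 2 ≤ y ^ 2) : E x ≤ E y :=
  Real.sqrt_le_sqrt (by linarith)

lemma E_le_one_add {x : ℝ} (hx : 0 ≤ x) : E x ≤ 1 + x := by
  rw [E, show (1 : ℝ) + x ^ 2 = (1 + x)^2 - 2*x by ring]
  calc Real.sqrt ((1+x)^2 - 2*x) ≤ Real.sqrt ((1+x)^2) := Real.sqrt_le_sqrt (by nlinarith)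
  _ = 1 + x := by rw [Real.sqrt_sq (by linarith)]

/-- `log x ≥ (3/2)(x-1)/(x+1)` for `x ≥ 1`. -/

lemma log_lb {x : ℝ} (hx : 1 ≤ x) : 3/2 * ((x - 1)/(x + 1)) ≤ Real.log x := by
  set u := Real.sqrt x with hu
  have hu1 : 1 ≤ u := by
    rw [hu, show (1:ℝ) = Real.sqrt 1 by simp]
    exact Real.sqrt_le_sqrt hx
  have hu0 : 0 < u := by linarith
  have hux : u ^ 2 = x := Real.sq_sqrt (by linarith)
  have hlog : Real.log x = 2 * Real.log u := by
    rw [hu, Real.log_sqrt (by linarith)]; ring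
  have h1 : 1 - u⁻¹ ≤ Real.log u := Real.one_sub_inv_le_log_of_pos hu0
  have huv : u * u⁻¹ = 1 := mul_inv_cancel₀ (ne_of_gt hu0)
  have key : (x - 1)/(x + 1) ≤ 4/3 * (1 - u⁻¹) := by
    rw [div_le_iff₀ (by linarith : (0:ℝ) < x + 1)]
    have h2 : u * u⁻¹ = 1 := huv
    nlinarith [mul_nonneg (sub_nonneg.2 hu1) (by nlinarith [sq_nonneg (u - 3/2)] : (0:ℝ) ≤ u^2 - 3*u + 4), inv_pos.2 hu0]
  rw [hlog]
  nlinarith [key, h1]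

lemma g_nonneg {z : ℝ} (h1 : 0 ≤ z) (h2 : z ≤ 1) : 0 ≤ z ^ 2 - z ^ 4 / 3 := by
  have hzz : z ^ 2 ≤ 1 := by nlinarith
  nlinarith [mul_nonneg (sq_nonneg z) (sub_nonneg.2 hzz)]

lemma D_pos (r : ℝ) {z : ℝ} (h2 : z ^ 2 ≤ 1) : 0 < 1 + r ^ 2 * (1 - z ^ 2) / 4 := by
  have := mul_nonneg (sq_nonneg r) (sub_nonneg.2 h2)
  linarith

lemma U_nonneg (r : ℝ) : 0 ≤ U r := by
  rw [U]
  apply mul_nonneg (by positivity)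
  apply intervalIntegral.integral_nonneg (by norm_num)
  intro z hz
  obtain ⟨h1, h2⟩ := hz
  exact div_nonneg (g_nonneg h1 h2) (le_of_lt (D_pos r (by nlinarith)))

lemma gD_contOn (r : ℝ) : ContinuousOn
    (fun z : ℝ => (z ^ 2 - z ^ 4 / 3) / (1 + r ^ 2 * (1 - z ^ 2) / 4)) (Set.Icc 0 1) := by
  apply ContinuousOn.div (by fun_prop) (by fun_prop)
  intro z hz
  obtain ⟨h1, h2⟩ := hz
  exact ne_of_gt (D_pos r (by nlinarith))

lemma gD_intgr (r : ℝ) {p q : ℝ} (hp : 0 ≤ p) (hq : q ≤ 1) (hpq : p ≤ q) :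
    IntervalIntegrable (fun z : ℝ => (z ^ 2 - z ^ 4 / 3) / (1 + r ^ 2 * (1 - z ^ 2) / 4))
      MeasureTheory.volume p q := by
  apply ContinuousOn.intervalIntegrable
  apply (gD_contOn r).mono
  rw [Set.uIcc_of_le hpq]
  exact Set.Icc_subset_Icc hp hq

lemma U_lb {r : ℝ} (hr : 0 < r) : Real.log (1 + r ^ 2 / 4) / (12 * π) ≤ U r := by
  have hr2 : (0:ℝ) < r ^ 2 := by positivity
  -- FTC for the comparison integrand
  have hKpos : ∀ z : ℝ, z ≤ 1 → 0 < 1 + r ^ 2 * (1 - z) / 2 := by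
    intro z hz; nlinarith [sq_nonneg r]
  have hftc : ∫ z in (1/2:ℝ)..1, 1 / (1 + r ^ 2 * (1 - z) / 2)
      = 2 / r ^ 2 * Real.log (1 + r ^ 2 / 4) := by
    have hderiv : ∀ z ∈ Set.uIcc (1/2:ℝ) 1,
        HasDerivAt (fun z : ℝ => -(2 / r ^ 2) * Real.log (1 + r ^ 2 * (1 - z) / 2))
          (1 / (1 + r ^ 2 * (1 - z) / 2)) z := by
      intro z hz
      rw [Set.uIcc_of_le (by norm_num)] at hz
      have hinner : HasDerivAt (fun z : ℝ => 1 + r ^ 2 * (1 - z) / 2) (-(r ^ 2) / 2) z := by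
        have h := ((((hasDerivAt_id z).const_sub 1).const_mul (r ^ 2)).div_const 2).const_add 1
        exact h.congr_deriv (by ring)
      have hpos := hKpos z hz.2
      have h := (hinner.log (ne_of_gt hpos)).const_mul (-(2 / r ^ 2))
      have he : -(2 / r ^ 2) * (-r ^ 2 / 2 / (1 + r ^ 2 * (1 - z) / 2))
          = (-(2 / r ^ 2) * (-r ^ 2 / 2)) / (1 + r ^ 2 * (1 - z) / 2) := by ring
      have he2 : -(2 / r ^ 2) * (-r ^ 2 / 2) = 1 := by field_simp
      exact h.congr_deriv (by rw [he, he2])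
    rw [intervalIntegral.integral_eq_sub_of_hasDerivAt hderiv]
    · have e1 : (1:ℝ) + r ^ 2 * (1 - 1) / 2 = 1 := by ring
      have e2 : (1:ℝ) + r ^ 2 * (1 - 1/2) / 2 = 1 + r ^ 2 / 4 := by ring
      rw [e1, e2, Real.log_one]
      ring
    · apply ContinuousOn.intervalIntegrable
      apply ContinuousOn.div continuousOn_const (by fun_prop)
      intro z hz
      rw [Set.uIcc_of_le (by norm_num)] at hz
      exact ne_of_gt (hKpos z hz.2)
  -- pointwise comparison on [1/2, 1]
  have hmono : ∫ z in (1/2:ℝ)..1, 1/6 * (1 / (1 + r ^ 2 * (1 - z) / 2))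
      ≤ ∫ z in (1/2:ℝ)..1, (z ^ 2 - z ^ 4 / 3) / (1 + r ^ 2 * (1 - z ^ 2) / 4) := by
    apply intervalIntegral.integral_mono_on (by norm_num)
    · apply ContinuousOn.intervalIntegrable
      apply ContinuousOn.mul continuousOn_const
      apply ContinuousOn.div continuousOn_const (by fun_prop)
      intro z hz
      rw [Set.uIcc_of_le (by norm_num)] at hz
      exact ne_of_gt (hKpos z hz.2)
    · exact gD_intgr r (by norm_num) le_rfl (by norm_num)
    · intro z hz
      obtain ⟨h1, h2⟩ := hz
      have hd1 : (0:ℝ) < 1 + r ^ 2 * (1 - z ^ 2) / 4 := D_pos r (by nlinarith)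
      have hd2 : (0:ℝ) < 1 + r ^ 2 * (1 - z) / 2 := hKpos z h2
      have hre : 1/6 * (1 / (1 + r ^ 2 * (1 - z) / 2)) = (1/6) / (1 + r ^ 2 * (1 - z) / 2) := by
        ring
      rw [hre, div_le_div_iff₀ hd2 hd1]
      have hz2l : (1:ℝ)/4 ≤ z ^ 2 := by nlinarith
      have hz2u : z ^ 2 ≤ 1 := by nlinarith
      have hnum : (1:ℝ)/6 ≤ z ^ 2 - z ^ 4 / 3 := by
        nlinarith [mul_nonneg (sq_nonneg z) (sub_nonneg.2 hz2u)]
      have hden : 1 + r ^ 2 * (1 - z ^ 2) / 4 ≤ 1 + r ^ 2 * (1 - z) / 2 := by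
        have h3 : (0:ℝ) ≤ 1 - z := by linarith
        nlinarith [mul_nonneg (sq_nonneg r) (mul_nonneg h3 (by linarith : (0:ℝ) ≤ z))]
      nlinarith [mul_le_mul_of_nonneg_left hden (by norm_num : (0:ℝ) ≤ 1/6),
        mul_le_mul_of_nonneg_right hnum (le_of_lt hd2)]
  have hsplit : ∫ z in (0:ℝ)..1, (z ^ 2 - z ^ 4 / 3) / (1 + r ^ 2 * (1 - z ^ 2) / 4)
      = (∫ z in (0:ℝ)..(1/2), (z ^ 2 - z ^ 4 / 3) / (1 + r ^ 2 * (1 - z ^ 2) / 4))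
        + ∫ z in (1/2:ℝ)..1, (z ^ 2 - z ^ 4 / 3) / (1 + r ^ 2 * (1 - z ^ 2) / 4) :=
    (intervalIntegral.integral_add_adjacent_intervals
      (gD_intgr r le_rfl (by norm_num) (by norm_num))
      (gD_intgr r (by norm_num) le_rfl (by norm_num))).symm
  have hfirst : 0 ≤ ∫ z in (0:ℝ)..(1/2), (z ^ 2 - z ^ 4 / 3) / (1 + r ^ 2 * (1 - z ^ 2) / 4) := by
    apply intervalIntegral.integral_nonneg (by norm_num)
    intro z hz
    obtain ⟨h1, h2⟩ := hz
    exact div_nonneg (g_nonneg h1 (by linarith)) (le_of_lt (D_pos r (by nlinarith)))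
  have hlog0 : 0 ≤ Real.log (1 + r ^ 2 / 4) := Real.log_nonneg (by nlinarith)
  have hval : ∫ z in (1/2:ℝ)..1, 1/6 * (1 / (1 + r ^ 2 * (1 - z) / 2))
      = 1/6 * (2 / r ^ 2 * Real.log (1 + r ^ 2 / 4)) := by
    rw [intervalIntegral.integral_const_mul, hftc]
  have hpi : (0:ℝ) < π := Real.pi_pos
  rw [U]
  calc Real.log (1 + r ^ 2 / 4) / (12 * π)
      = r ^ 2 / (4 * π) * (1/6 * (2 / r ^ 2 * Real.log (1 + r ^ 2 / 4))) := by
        field_simp; ring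
    _ ≤ r ^ 2 / (4 * π) * ∫ z in (0:ℝ)..1, (z ^ 2 - z ^ 4 / 3) / (1 + r ^ 2 * (1 - z ^ 2) / 4) := by
        apply mul_le_mul_of_nonneg_left _ (by positivity)
        rw [hsplit, ← hval]
        linarith [hmono, hfirst]

lemma sq_lt_one' {z c : ℝ} (h0 : 0 ≤ z) (hzc : z ≤ c) (hc : c < 1) : z ^ 2 < 1 := by nlinarith

lemma sq_le_one'' {z c : ℝ} (h0 : 0 ≤ z) (hzc : z ≤ c) (hc : c ≤ 1) : z ^ 2 ≤ 1 := by nlinarith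

lemma h_nonneg {z : ℝ} (h0 : 0 ≤ z) (h1 : z ≤ 1) : 0 ≤ z - z ^ 3 / 3 := by
  have h2 : z ^ 2 ≤ 1 := by nlinarith
  nlinarith [mul_nonneg h0 (sub_nonneg.2 h2)]

lemma g_lb {w z : ℝ} (hw : w ^ 2 ≤ z ^ 2) (hz1 : z ^ 2 ≤ 1) : 2 * w ^ 2 / 3 ≤ z ^ 2 - z ^ 4 / 3 := by
  nlinarith [mul_nonneg (sq_nonneg z) (sub_nonneg.2 hz1)]

lemma g_ub {z : ℝ} (hz1 : z ^ 2 ≤ 1) : z ^ 2 - z ^ 4 / 3 ≤ 1 := by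
  nlinarith [sq_nonneg (z ^ 2)]

lemma logdiff_lb (Λ r : ℝ) (hΛ : 1 ≤ Λ) (hr : 0 < r) (hr2 : r ≤ 2 * Λ) :
    3 / 2 * (r / (E Λ + E (Λ - r)))
      ≤ Real.log (E Λ + Λ) - Real.log (E (Λ - r) + (Λ - r)) := by
  have hEa2 : E Λ ^ 2 = 1 + Λ ^ 2 := E_sq Λ
  have hEb2 : E (Λ - r) ^ 2 = 1 + (Λ - r) ^ 2 := E_sq (Λ - r)
  have hEapos : 0 < E Λ := E_pos Λ
  have hEbpos : 0 < E (Λ - r) := E_pos (Λ - r)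
  have haEa : Λ < E Λ := lt_E Λ
  have hbEb : Λ - r < E (Λ - r) := lt_E _
  have hbEb' : -(Λ - r) < E (Λ - r) := neg_lt_E _
  have hEbEa : E (Λ - r) ≤ E Λ := E_le_E (by nlinarith)
  have hS : 0 < E Λ + E (Λ - r) := by linarith
  have ha1 : (0:ℝ) < E Λ + Λ := by linarith [neg_lt_E Λ]
  have hb1 : (0:ℝ) < E (Λ - r) + (Λ - r) := by linarith
  have na : (E Λ + Λ) ≠ 0 := ne_of_gt ha1
  have nb : (E (Λ - r) + (Λ - r)) ≠ 0 := ne_of_gt hb1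
  have hQ1 : 1 ≤ (E Λ + Λ) / (E (Λ - r) + (Λ - r)) := by
    rw [le_div_iff₀ hb1]; linarith
  have h := log_lb hQ1
  have hLQeq : Real.log (E Λ + Λ) - Real.log (E (Λ - r) + (Λ - r))
      = Real.log ((E Λ + Λ) / (E (Λ - r) + (Λ - r))) := (Real.log_div na nb).symm
  have hfrac : ((E Λ + Λ) / (E (Λ - r) + (Λ - r)) - 1) / ((E Λ + Λ) / (E (Λ - r) + (Λ - r)) + 1)
      = r / (E Λ + E (Λ - r)) := by
    rw [div_eq_div_iff (by positivity : ((E Λ + Λ) / (E (Λ - r) + (Λ - r)) + 1) ≠ 0) (ne_of_gt hS)]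
    field_simp
    linear_combination hEa2 - hEb2
  rw [hLQeq, ← hfrac]
  exact h

lemma logdiff_ub (Λ r : ℝ) (hΛ : 1 ≤ Λ) (hr : 0 < r) (hr2 : r ≤ 2 * Λ) :
    Real.log (E Λ + Λ) - Real.log (E (Λ - r) + (Λ - r)) ≤ 2 * Real.log (1 + 2 * r) := by
  have hEa2 : E Λ ^ 2 = 1 + Λ ^ 2 := E_sq Λ
  have hEb2 : E (Λ - r) ^ 2 = 1 + (Λ - r) ^ 2 := E_sq (Λ - r)
  have hEapos : 0 < E Λ := E_pos Λ
  have hEbpos : 0 < E (Λ - r) := E_pos (Λ - r)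
  have haEa : Λ < E Λ := lt_E Λ
  have hbEb : Λ - r < E (Λ - r) := lt_E _
  have hbEb' : -(Λ - r) < E (Λ - r) := neg_lt_E _
  have hS : 0 < E Λ + E (Λ - r) := by linarith
  have ha1 : (0:ℝ) < E Λ + Λ := by linarith [neg_lt_E Λ]
  have hb1 : (0:ℝ) < E (Λ - r) + (Λ - r) := by linarith
  have nb : (E (Λ - r) + (Λ - r)) ≠ 0 := ne_of_gt hb1
  have hinvEb : (E (Λ - r) - (Λ - r)) * (E (Λ - r) + (Λ - r)) = 1 := by linear_combination hEb2
  have hlogr0 : 0 ≤ Real.log (1 + 2 * r) := Real.log_nonneg (by linarith)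
  rcases le_or_gt 0 (Λ - r) with hb | hb
  · have hid : (E Λ - E (Λ - r)) * (E Λ + E (Λ - r)) = r * (2 * Λ - r) := by
      linear_combination hEa2 - hEb2
    have h6 : r * (2 * Λ - r) ≤ r * (E Λ + E (Λ - r)) :=
      mul_le_mul_of_nonneg_left (by linarith) hr.le
    have hdiffle : E Λ - E (Λ - r) ≤ r :=
      le_of_mul_le_mul_right (by linarith) hS
    have h7 : 1 ≤ E (Λ - r) + (Λ - r) := by linarith [one_le_E (Λ - r)]
    have h8 : 2 * r * 1 ≤ 2 * r * (E (Λ - r) + (Λ - r)) :=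
      mul_le_mul_of_nonneg_left h7 (by linarith)
    have h1 : E Λ + Λ ≤ (E (Λ - r) + (Λ - r)) * (1 + 2 * r) := by nlinarith
    have h2 : Real.log (E Λ + Λ) ≤ Real.log ((E (Λ - r) + (Λ - r)) * (1 + 2 * r)) :=
      (Real.log_le_log_iff ha1 (by nlinarith)).2 h1
    rw [Real.log_mul nb (by linarith)] at h2
    linarith
  · have hEasm : E Λ + Λ ≤ 1 + 2 * r := by
      have := E_le_one_add (by linarith : (0:ℝ) ≤ Λ)
      linarith
    have hEbeven : E (Λ - r) = E (r - Λ) := by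
      rw [E, E]; congr 2; ring
    have hEbsm : E (Λ - r) - (Λ - r) ≤ 1 + 2 * r := by
      have := E_le_one_add (by linarith : (0:ℝ) ≤ r - Λ)
      rw [← hEbeven] at this
      linarith
    have hEbb : (0:ℝ) < E (Λ - r) - (Λ - r) := by linarith
    have hinv : Real.log (E (Λ - r) + (Λ - r)) = - Real.log (E (Λ - r) - (Λ - r)) := by
      rw [← Real.log_inv]
      congr 1
      rw [inv_eq_one_div, eq_div_iff (ne_of_gt hEbb)]
      linear_combination hinvEb
    have l1 : Real.log (E Λ + Λ) ≤ Real.log (1 + 2 * r) :=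
      (Real.log_le_log_iff ha1 (by linarith)).2 hEasm
    have l3 : Real.log (E (Λ - r) - (Λ - r)) ≤ Real.log (1 + 2 * r) :=
      (Real.log_le_log_iff hEbb (by linarith)).2 hEbsm
    rw [hinv]
    linarith

set_option maxHeartbeats 1600000 in

lemma key (Λ : ℝ) (hΛ : 1 ≤ Λ) (r : ℝ) (hr : 0 < r) (hr2 : r ≤ 2 * Λ) :
    BL Λ r ≤ BC Λ ∧
    BC Λ - BL Λ r ≤ (Real.log (E Λ + Λ) - Real.log (E (Λ - r) + (Λ - r))) / (2 * π) + U r := by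
  have hπ : (0:ℝ) < π := Real.pi_pos
  have hEa2 : E Λ ^ 2 = 1 + Λ ^ 2 := E_sq Λ
  have hEb2 : E (Λ - r) ^ 2 = 1 + (Λ - r) ^ 2 := E_sq (Λ - r)
  have hEapos : 0 < E Λ := E_pos Λ
  have hEbpos : 0 < E (Λ - r) := E_pos (Λ - r)
  have haEa : Λ < E Λ := lt_E Λ
  have hbEb : Λ - r < E (Λ - r) := lt_E _
  have hbEb' : -(Λ - r) < E (Λ - r) := neg_lt_E _
  have hEbEa : E (Λ - r) ≤ E Λ := E_le_E (by nlinarith)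
  have hS : 0 < E Λ + E (Λ - r) := by linarith
  set Z := (2 * Λ - r) / (E Λ + E (Λ - r)) with hZdef
  set Z0 := Λ / E Λ with hZ0def
  have hZnn : 0 ≤ Z := div_nonneg (by linarith) hS.le
  have hZ0nn : 0 ≤ Z0 := div_nonneg (by linarith) hEapos.le
  have hZ0lt1 : Z0 < 1 := (div_lt_one hEapos).2 haEa
  have hZle : Z ≤ Z0 := by
    rw [hZdef, hZ0def, div_le_div_iff₀ hS hEapos]
    rcases le_or_gt (Λ - r) 0 with hb | hb
    · nlinarith [mul_pos (by linarith : (0:ℝ) < Λ) hEbpos, mul_nonpos_of_nonpos_of_nonneg hb hEapos.le]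
    · nlinarith [mul_pos hb hEapos, mul_pos (by linarith : (0:ℝ) < Λ) hEbpos,
        sq_nonneg ((Λ - r) * E Λ - Λ * E (Λ - r)), sq_nonneg ((Λ - r) * E Λ + Λ * E (Λ - r))]
  have hZlt1 : Z < 1 := lt_of_le_of_lt hZle hZ0lt1
  have hrZ : E Λ - E (Λ - r) = r * Z := by
    rw [hZdef]
    field_simp
    linear_combination hEa2 - hEb2
  have hZL : ZL Λ r = Z := by
    rw [ZL, if_neg (ne_of_gt hr), hrZ, mul_comm, mul_div_assoc, div_self (ne_of_gt hr), mul_one]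
  have hZL0 : ZL Λ 0 = Z0 := by rw [ZL, if_pos rfl]
  -- BC as a single integral
  have hBC : BC Λ = 1 / π * ∫ z in (0:ℝ)..Z0, (z ^ 2 - z ^ 4 / 3) / (1 - z ^ 2) := by
    rw [BC, BL, hZL0]
    norm_num
  have hBL : BL Λ r = 1 / π * (∫ z in (0:ℝ)..Z,
      (z ^ 2 - z ^ 4 / 3) / ((1 - z ^ 2) * (1 + r ^ 2 * (1 - z ^ 2) / 4)))
      + r / (2 * π) * (∫ z in (0:ℝ)..Z, (z - z ^ 3 / 3) / (E Λ - r * z / 2)) := by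
    rw [BL, hZL]
  -- positivity facts on the intervals
  have hone_sub : ∀ z ∈ Set.Icc (0:ℝ) Z0, 0 < 1 - z ^ 2 := by
    intro z hz
    have := sq_lt_one' hz.1 hz.2 hZ0lt1
    linarith
  have hKpos : ∀ z ∈ Set.Icc (0:ℝ) Z, 0 < E Λ - r * z / 2 := by
    intro z hz
    have h1 : r * z ≤ r * Z := mul_le_mul_of_nonneg_left hz.2 hr.le
    rw [← hrZ] at h1
    linarith
  -- integrability
  have hFcont : ContinuousOn (fun z : ℝ => (z ^ 2 - z ^ 4 / 3) / (1 - z ^ 2)) (Set.Icc 0 Z0) := by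
    apply ContinuousOn.div (by fun_prop) (by fun_prop)
    exact fun z hz => ne_of_gt (hone_sub z hz)
  have hF_int : ∀ p q : ℝ, 0 ≤ p → q ≤ Z0 → p ≤ q →
      IntervalIntegrable (fun z : ℝ => (z ^ 2 - z ^ 4 / 3) / (1 - z ^ 2))
        MeasureTheory.volume p q := by
    intro p q hp hq hpq
    apply ContinuousOn.intervalIntegrable
    apply hFcont.mono
    rw [Set.uIcc_of_le hpq]
    exact Set.Icc_subset_Icc hp hq
  have hfD_int : IntervalIntegrable (fun z : ℝ =>
      (z ^ 2 - z ^ 4 / 3) / ((1 - z ^ 2) * (1 + r ^ 2 * (1 - z ^ 2) / 4)))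
      MeasureTheory.volume 0 Z := by
    apply ContinuousOn.intervalIntegrable
    rw [Set.uIcc_of_le hZnn]
    apply ContinuousOn.div (by fun_prop) (by fun_prop)
    intro z hz
    have h1 := hone_sub z (Set.Icc_subset_Icc le_rfl hZle hz)
    have h2 : 0 < 1 + r ^ 2 * (1 - z ^ 2) / 4 := D_pos r (by nlinarith)
    positivity
  have hgD_int : IntervalIntegrable (fun z : ℝ =>
      r ^ 2 / 4 * ((z ^ 2 - z ^ 4 / 3) / (1 + r ^ 2 * (1 - z ^ 2) / 4)))
      MeasureTheory.volume 0 Z := by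
    apply IntervalIntegrable.const_mul
    exact gD_intgr r le_rfl (by linarith) hZnn
  have hK_int : IntervalIntegrable (fun z : ℝ => (z - z ^ 3 / 3) / (E Λ - r * z / 2))
      MeasureTheory.volume 0 Z := by
    apply ContinuousOn.intervalIntegrable
    rw [Set.uIcc_of_le hZnn]
    apply ContinuousOn.div (by fun_prop) (by fun_prop)
    exact fun z hz => ne_of_gt (hKpos z hz)
  have hW_int : IntervalIntegrable (fun z : ℝ => 1 / (1 - z ^ 2))
      MeasureTheory.volume Z Z0 := by
    apply ContinuousOn.intervalIntegrable
    apply ContinuousOn.div (by fun_prop) (by fun_prop)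
    intro z hz
    rw [Set.uIcc_of_le hZle] at hz
    exact ne_of_gt (hone_sub z (Set.Icc_subset_Icc hZnn le_rfl hz))
  -- splitting of the BC integral
  have hsplitF : ∫ z in (0:ℝ)..Z0, (z ^ 2 - z ^ 4 / 3) / (1 - z ^ 2)
      = (∫ z in (0:ℝ)..Z, (z ^ 2 - z ^ 4 / 3) / (1 - z ^ 2))
        + ∫ z in Z..Z0, (z ^ 2 - z ^ 4 / 3) / (1 - z ^ 2) :=
    (intervalIntegral.integral_add_adjacent_intervals
      (hF_int 0 Z le_rfl hZle hZnn) (hF_int Z Z0 hZnn le_rfl hZle)).symm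
  -- pointwise difference identity on [0, Z]
  have hcongr : (∫ z in (0:ℝ)..Z, (z ^ 2 - z ^ 4 / 3) / (1 - z ^ 2))
      - (∫ z in (0:ℝ)..Z,
          (z ^ 2 - z ^ 4 / 3) / ((1 - z ^ 2) * (1 + r ^ 2 * (1 - z ^ 2) / 4)))
      = ∫ z in (0:ℝ)..Z, r ^ 2 / 4 * ((z ^ 2 - z ^ 4 / 3) / (1 + r ^ 2 * (1 - z ^ 2) / 4)) := by
    rw [← intervalIntegral.integral_sub (hF_int 0 Z le_rfl hZle hZnn) hfD_int]
    apply intervalIntegral.integral_congr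
    intro z hz
    rw [Set.uIcc_of_le hZnn] at hz
    have h1 := hone_sub z (Set.Icc_subset_Icc le_rfl hZle hz)
    have h2 : 0 < 1 + r ^ 2 * (1 - z ^ 2) / 4 := D_pos r (by nlinarith)
    have h1' : (1 - z ^ 2) ≠ 0 := ne_of_gt h1
    have h2' : (1 + r ^ 2 * (1 - z ^ 2) / 4) ≠ 0 := ne_of_gt h2
    field_simp
    ring
  have hId : BC Λ - BL Λ r
      = 1 / π * ((∫ z in Z..Z0, (z ^ 2 - z ^ 4 / 3) / (1 - z ^ 2))
          + ∫ z in (0:ℝ)..Z, r ^ 2 / 4 * ((z ^ 2 - z ^ 4 / 3) / (1 + r ^ 2 * (1 - z ^ 2) / 4)))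
        - r / (2 * π) * (∫ z in (0:ℝ)..Z, (z - z ^ 3 / 3) / (E Λ - r * z / 2)) := by
    rw [hBC, hBL, hsplitF, ← hcongr]
    ring
  -- FTC: the middle weight integral
  have hWftc : ∫ z in Z..Z0, 1 / (1 - z ^ 2)
      = ((Real.log (1 + Z0) - Real.log (1 - Z0)) - (Real.log (1 + Z) - Real.log (1 - Z))) / 2 := by
    have hderiv : ∀ z ∈ Set.uIcc Z Z0,
        HasDerivAt (fun z : ℝ => (Real.log (1 + z) - Real.log (1 - z)) / 2)
          (1 / (1 - z ^ 2)) z := by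
      intro z hz
      rw [Set.uIcc_of_le hZle] at hz
      have hz0 : 0 ≤ z := le_trans hZnn hz.1
      have hz1 : z < 1 := lt_of_le_of_lt hz.2 hZ0lt1
      have hp1 : (0:ℝ) < 1 + z := by linarith
      have hp2 : (0:ℝ) < 1 - z := by linarith
      have h1 : HasDerivAt (fun z : ℝ => Real.log (1 + z)) (1 / (1 + z)) z := by
        have := (((hasDerivAt_id z).const_add 1).log (ne_of_gt hp1))
        simpa using this
      have h2 : HasDerivAt (fun z : ℝ => Real.log (1 - z)) (-1 / (1 - z)) z := by
        have := (((hasDerivAt_id z).const_sub 1).log (ne_of_gt hp2))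
        simpa using this
      have h3 := (h1.sub h2).div_const 2
      have h1z : (1:ℝ) - z ^ 2 ≠ 0 := by nlinarith
      exact h3.congr_deriv (by field_simp; ring)
    rw [intervalIntegral.integral_eq_sub_of_hasDerivAt hderiv hW_int]
    ring
  -- the log identity : W = (log(EΛ+Λ) - log(E(Λ-r)+(Λ-r)))/2
  have ha1 : (0:ℝ) < E Λ + Λ := by linarith [neg_lt_E Λ]
  have hb1 : (0:ℝ) < E (Λ - r) + (Λ - r) := by linarith
  have hinvEa : (E Λ - Λ) * (E Λ + Λ) = 1 := by linear_combination hEa2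
  have hinvEb : (E (Λ - r) - (Λ - r)) * (E (Λ - r) + (Λ - r)) = 1 := by linear_combination hEb2
  have na : (E Λ + Λ) ≠ 0 := ne_of_gt ha1
  have nb : (E (Λ - r) + (Λ - r)) ≠ 0 := ne_of_gt hb1
  have nEa : E Λ ≠ 0 := ne_of_gt hEapos
  have nS : (E Λ + E (Λ - r)) ≠ 0 := ne_of_gt hS
  have hpos1 : (0:ℝ) < E Λ + E (Λ - r) + (2 * Λ - r) := by linarith
  have nT : (E Λ + E (Λ - r) + (2 * Λ - r)) ≠ 0 := ne_of_gt hpos1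
  have hZ0a : 1 + Z0 = (E Λ + Λ) / E Λ := by rw [hZ0def]; field_simp
  have hZ0b : 1 - Z0 = 1 / ((E Λ + Λ) * E Λ) := by
    rw [hZ0def, eq_div_iff (mul_ne_zero na nEa)]
    field_simp
    linear_combination hEa2
  have hZa : 1 + Z = (E Λ + E (Λ - r) + (2 * Λ - r)) / (E Λ + E (Λ - r)) := by
    rw [hZdef]; field_simp
  have hkey2 : (E Λ + E (Λ - r) - (2 * Λ - r)) * ((E Λ + Λ) * (E (Λ - r) + (Λ - r)))
      = E Λ + E (Λ - r) + (2 * Λ - r) := by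
    linear_combination (E (Λ - r) + (Λ - r)) * hEa2 + (E Λ + Λ) * hEb2
  have hZb : 1 - Z = (E Λ + E (Λ - r) + (2 * Λ - r)) /
      ((E Λ + Λ) * (E (Λ - r) + (Λ - r)) * (E Λ + E (Λ - r))) := by
    rw [hZdef, eq_div_iff (mul_ne_zero (mul_ne_zero na nb) nS)]
    field_simp
    linear_combination hkey2
  have hW2 : ((Real.log (1 + Z0) - Real.log (1 - Z0)) - (Real.log (1 + Z) - Real.log (1 - Z))) / 2
      = (Real.log (E Λ + Λ) - Real.log (E (Λ - r) + (Λ - r))) / 2 := by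
    rw [hZ0a, hZ0b, hZa, hZb,
        Real.log_div nT nS, Real.log_div na nEa,
        Real.log_div one_ne_zero (mul_ne_zero na nEa),
        Real.log_div nT (mul_ne_zero (mul_ne_zero na nb) nS),
        Real.log_mul na nEa, Real.log_mul (mul_ne_zero na nb) nS, Real.log_mul na nb,
        Real.log_one]
    ring
  have hW : ∫ z in Z..Z0, 1 / (1 - z ^ 2)
      = (Real.log (E Λ + Λ) - Real.log (E (Λ - r) + (Λ - r))) / 2 := by
    rw [hWftc, hW2]
  have hLQlb := logdiff_lb Λ r hΛ hr hr2
  have hLQub := logdiff_ub Λ r hΛ hr hr2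
  -- bounds on the three integrals
  have hI3nn : 0 ≤ ∫ z in (0:ℝ)..Z, (z - z ^ 3 / 3) / (E Λ - r * z / 2) := by
    apply intervalIntegral.integral_nonneg hZnn
    intro z hz
    have h0 : 0 ≤ z := hz.1
    have h1 : z ≤ 1 := le_trans hz.2 hZlt1.le
    exact div_nonneg (h_nonneg h0 h1) (hKpos z hz).le
  have hI3ub : ∫ z in (0:ℝ)..Z, (z - z ^ 3 / 3) / (E Λ - r * z / 2)
      ≤ Z ^ 2 / (E Λ + E (Λ - r)) := by
    have hval : ∫ z in (0:ℝ)..Z, 2 / (E Λ + E (Λ - r)) * z = Z ^ 2 / (E Λ + E (Λ - r)) := by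
      rw [intervalIntegral.integral_const_mul, integral_id]
      ring
    rw [← hval]
    apply intervalIntegral.integral_mono_on hZnn hK_int
      ((continuous_const.mul continuous_id').intervalIntegrable _ _)
    intro z hz
    have h0 : 0 ≤ z := hz.1
    have h1 : z ≤ 1 := le_trans hz.2 hZlt1.le
    have hKz := hKpos z hz
    have hK2 : (E Λ + E (Λ - r)) / 2 ≤ E Λ - r * z / 2 := by
      have h5 : r * z ≤ r * Z := mul_le_mul_of_nonneg_left hz.2 hr.le
      rw [← hrZ] at h5
      linarith
    rw [div_le_iff₀ hKz]
    have e : 2 / (E Λ + E (Λ - r)) * z * ((E Λ + E (Λ - r)) / 2) = z := by field_simp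
    have mz : 0 ≤ 2 / (E Λ + E (Λ - r)) * z := by positivity
    have hprod := mul_le_mul_of_nonneg_left hK2 mz
    rw [e] at hprod
    have hz3 := h_nonneg h0 h1
    simp only [Pi.mul_apply]
    linarith [pow_nonneg h0 3]
  have hMlb : 2 * Z ^ 2 / 3 * ((Real.log (E Λ + Λ) - Real.log (E (Λ - r) + (Λ - r))) / 2)
      ≤ ∫ z in Z..Z0, (z ^ 2 - z ^ 4 / 3) / (1 - z ^ 2) := by
    rw [← hW, ← intervalIntegral.integral_const_mul]
    apply intervalIntegral.integral_mono_on hZle (hW_int.const_mul _)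
      (hF_int Z Z0 hZnn le_rfl hZle)
    intro z hz
    have h0 : 0 ≤ z := le_trans hZnn hz.1
    have hsub := hone_sub z ⟨h0, hz.2⟩
    have hz21 : z ^ 2 ≤ 1 := (sq_lt_one' h0 hz.2 hZ0lt1).le
    have hZz : Z ^ 2 ≤ z ^ 2 := pow_le_pow_left₀ hZnn hz.1 2
    have hnum : 2 * Z ^ 2 / 3 ≤ z ^ 2 - z ^ 4 / 3 := g_lb hZz hz21
    have e : 2 * Z ^ 2 / 3 * (1 / (1 - z ^ 2)) = (2 * Z ^ 2 / 3) / (1 - z ^ 2) := by ring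
    rw [e]
    exact (div_le_div_iff_of_pos_right hsub).2 hnum
  have hMub : ∫ z in Z..Z0, (z ^ 2 - z ^ 4 / 3) / (1 - z ^ 2)
      ≤ (Real.log (E Λ + Λ) - Real.log (E (Λ - r) + (Λ - r))) / 2 := by
    rw [← hW]
    apply intervalIntegral.integral_mono_on hZle (hF_int Z Z0 hZnn le_rfl hZle) hW_int
    intro z hz
    have h0 : 0 ≤ z := le_trans hZnn hz.1
    have hsub := hone_sub z ⟨h0, hz.2⟩
    have hz21 : z ^ 2 < 1 := sq_lt_one' h0 hz.2 hZ0lt1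
    have hnum : z ^ 2 - z ^ 4 / 3 ≤ 1 := g_ub hz21.le
    exact (div_le_div_iff_of_pos_right hsub).2 hnum
  have hJnn : 0 ≤ ∫ z in (0:ℝ)..Z,
      r ^ 2 / 4 * ((z ^ 2 - z ^ 4 / 3) / (1 + r ^ 2 * (1 - z ^ 2) / 4)) := by
    apply intervalIntegral.integral_nonneg hZnn
    intro z hz
    have h1 : z ≤ 1 := le_trans hz.2 hZlt1.le
    exact mul_nonneg (by positivity)
      (div_nonneg (g_nonneg hz.1 h1) (D_pos r (sq_le_one'' hz.1 h1 le_rfl)).le)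
  have hJub : (∫ z in (0:ℝ)..Z,
      r ^ 2 / 4 * ((z ^ 2 - z ^ 4 / 3) / (1 + r ^ 2 * (1 - z ^ 2) / 4))) ≤ π * U r := by
    have hUeq : π * U r
        = r ^ 2 / 4 * ∫ z in (0:ℝ)..1, (z ^ 2 - z ^ 4 / 3) / (1 + r ^ 2 * (1 - z ^ 2) / 4) := by
      rw [U]; field_simp
    rw [intervalIntegral.integral_const_mul, hUeq]
    apply mul_le_mul_of_nonneg_left _ (by positivity)
    have hsplit2 : ∫ z in (0:ℝ)..1, (z ^ 2 - z ^ 4 / 3) / (1 + r ^ 2 * (1 - z ^ 2) / 4)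
        = (∫ z in (0:ℝ)..Z, (z ^ 2 - z ^ 4 / 3) / (1 + r ^ 2 * (1 - z ^ 2) / 4))
          + ∫ z in Z..1, (z ^ 2 - z ^ 4 / 3) / (1 + r ^ 2 * (1 - z ^ 2) / 4) :=
      (intervalIntegral.integral_add_adjacent_intervals
        (gD_intgr r le_rfl hZlt1.le hZnn) (gD_intgr r hZnn le_rfl hZlt1.le)).symm
    have htail : 0 ≤ ∫ z in Z..1, (z ^ 2 - z ^ 4 / 3) / (1 + r ^ 2 * (1 - z ^ 2) / 4) := by
      apply intervalIntegral.integral_nonneg hZlt1.le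
      intro z hz
      have h0 : 0 ≤ z := le_trans hZnn hz.1
      exact div_nonneg (g_nonneg h0 hz.2) (D_pos r (sq_le_one'' h0 hz.2 le_rfl)).le
    rw [hsplit2]
    linarith
  -- abbreviate the three integrals
  set M := ∫ z in Z..Z0, (z ^ 2 - z ^ 4 / 3) / (1 - z ^ 2) with hMdef
  set J := ∫ z in (0:ℝ)..Z,
      r ^ 2 / 4 * ((z ^ 2 - z ^ 4 / 3) / (1 + r ^ 2 * (1 - z ^ 2) / 4)) with hJdef2
  set I3 := ∫ z in (0:ℝ)..Z, (z - z ^ 3 / 3) / (E Λ - r * z / 2) with hI3def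
  set LQ := Real.log (E Λ + Λ) - Real.log (E (Λ - r) + (Λ - r)) with hLQdef
  constructor
  · -- nonnegativity
    have hMge : r / 2 * I3 ≤ M := by
      have c1 : r / 2 * I3 ≤ r / 2 * (Z ^ 2 / (E Λ + E (Λ - r))) :=
        mul_le_mul_of_nonneg_left hI3ub (by linarith)
      have c3 : 3 / 4 * (r / (E Λ + E (Λ - r))) ≤ LQ / 2 := by linarith
      have c4 : 2 * Z ^ 2 / 3 * (3 / 4 * (r / (E Λ + E (Λ - r)))) ≤ 2 * Z ^ 2 / 3 * (LQ / 2) :=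
        mul_le_mul_of_nonneg_left c3 (by positivity)
      have e : 2 * Z ^ 2 / 3 * (3 / 4 * (r / (E Λ + E (Λ - r)))) = r / 2 * (Z ^ 2 / (E Λ + E (Λ - r))) := by
        ring
      linarith
    have h0 : 0 ≤ BC Λ - BL Λ r := by
      rw [hId, show 1 / π * (M + J) - r / (2 * π) * I3 = 1 / π * (M + J - r / 2 * I3) from by ring]
      have hsum : 0 ≤ M + J - r / 2 * I3 := by linarith
      exact mul_nonneg (by positivity) hsum
    linarith
  · -- upper bound
    rw [hId]
    have hstep : M + J ≤ LQ / 2 + π * U r := by linarith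
    have h4 : 0 ≤ r / (2 * π) * I3 := by positivity
    have h5 : 1 / π * (M + J) ≤ 1 / π * (LQ / 2 + π * U r) :=
      mul_le_mul_of_nonneg_left hstep (by positivity)
    have e2 : 1 / π * (LQ / 2 + π * U r) = LQ / (2 * π) + U r := by
      field_simp
    linarith

theorem UL_nonneg_and_bounded (Λ : ℝ) (hΛ : 1 ≤ Λ) (r : ℝ) (hr : 0 ≤ r) (hr2 : r ≤ 2 * Λ) :
    0 ≤ UL Λ r ∧ UL Λ r ≤ 258 / π * (1 + U r) := by
  have hπ : (0:ℝ) < π := Real.pi_pos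
  have hUL : UL Λ r = BC Λ - BL Λ r := if_pos ⟨hr, hr2⟩
  rcases eq_or_lt_of_le hr with h0 | hpos
  · subst h0
    have hU0 : U 0 = 0 := by rw [U]; norm_num
    have hUL0 : UL Λ 0 = 0 := by rw [hUL, BC, sub_self]
    rw [hUL0, hU0]
    norm_num
    positivity
  · obtain ⟨h1, h2⟩ := key Λ hΛ r hpos hr2
    have hUnn := U_nonneg r
    have hUlb := U_lb hpos
    have hLQub := logdiff_ub Λ r hΛ hpos hr2
    constructor
    · rw [hUL]; linarith
    · rw [hUL]
      have hlog3 : Real.log (1 + 2 * r) ≤ Real.log 3 + Real.log (1 + r ^ 2 / 4) := by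
        rw [← Real.log_mul (by norm_num) (by positivity)]
        exact (Real.log_le_log_iff (by linarith) (by positivity)).2
          (by nlinarith [sq_nonneg (r - 4/3)])
      have hlog3v : Real.log 3 ≤ 2 := by
        have := Real.log_le_sub_one_of_pos (by norm_num : (0:ℝ) < 3); linarith
      rw [div_le_iff₀ (by positivity : (0:ℝ) < 12 * π)] at hUlb
      have hchain : Real.log (E Λ + Λ) - Real.log (E (Λ - r) + (Λ - r))
          ≤ 4 + 24 * π * U r := by linarith
      have hfin1 : (Real.log (E Λ + Λ) - Real.log (E (Λ - r) + (Λ - r))) / (2 * π)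
          ≤ (4 + 24 * π * U r) / (2 * π) :=
        (div_le_div_iff_of_pos_right (by positivity)).2 hchain
      have e3 : (4 + 24 * π * U r) / (2 * π) = 2 / π + 12 * U r := by
        field_simp
        ring
      have h13 : (13:ℝ) ≤ 258 / π := by
        rw [le_div_iff₀ hπ]; nlinarith [Real.pi_le_four]
      have t2 : 13 * U r ≤ 258 / π * U r := mul_le_mul_of_nonneg_right h13 hUnn
      have t1 : (2:ℝ) / π ≤ 258 / π := (div_le_div_iff_of_pos_right hπ).2 (by norm_num)
      have expand : 258 / π * (1 + U r) = 258 / π + 258 / π * U r := by ring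
      linarith
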